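/- Let n be a finite type with Fintype.card n ≥ 2. Let w : n → n → ℝ be a weight function with 0 ≤ w i j for all i, j and w i i = 0, whose graph is strongly connected, let L be its Laplacian, and set P = Matrix.exp ℝ (-L). Then the all-ones vector attains the induced sup-norm of P, i.e. ‖P *ᵥ (fun _ => (1 : ℝ))‖ = 1 = ‖(fun _ => (1 : ℝ))‖, and it is the unique maximizer up to sign: for every v : n → ℝ with ‖v‖ = 1 and ‖P *ᵥ v‖ = 1, either v = (fun _ => (1 : ℝ)) or v = (fun _ => (-1 : ℝ)). -/

import Mathlib

open Matrix

/-!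
Since `L` kills the all-ones vector `1`, so does every positive power of `-L`, hence
`P = exp (-L)` fixes `1`: each row of `P` sums to one. Adding `c • 1` to `-L` for large `c`
gives an entrywise nonnegative matrix `M` with the same positive off-diagonal entries, and
`P = exp (-c) • exp M`; strong connectivity makes every entry of some power of `M` positive, so
every entry of `P` is positive. Finally, if `‖v‖ ≤ 1` and `|(P *ᵥ v) i| = 1`, then `(P *ᵥ v) i`
is a convex combination of the `v j` with positive weights reaching `±1`, which forces `v = ±1`.
-/

open NormedSpace Finset

open scoped Nat

theorem eq_one_of_sum_mul_eq_one {ι R : Type*} [Fintype ι] [Field R] [LinearOrder R]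
    [IsStrictOrderedRing R] {p v : ι → R} (hp : ∀ j, 0 < p j) (hp1 : ∑ j, p j = 1)
    (hv : ∀ j, v j ≤ 1) (h : ∑ j, p j * v j = 1) : v = 1 := by
  have hle : ∀ j ∈ univ, p j * v j ≤ p j := fun j _ => mul_le_of_le_one_right (hp j).le (hv j)
  have heq := (sum_eq_sum_iff_of_le hle).1 (h.trans hp1.symm)
  funext j
  simpa [(hp j).ne'] using heq j (mem_univ j)

namespace Matrix

theorem eq_one_or_eq_neg_one_of_norm_mulVec_eq_one {n : Type*} [Fintype n] [Nonempty n]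
    {P : Matrix n n ℝ} (hP : ∀ i j, 0 < P i j) (hP1 : P *ᵥ 1 = 1) {v : n → ℝ} (hv : ‖v‖ ≤ 1)
    (hPv : ‖P *ᵥ v‖ = 1) : v = 1 ∨ v = -1 := by
  obtain ⟨i, hi⟩ := (IsGreatest.pi_norm (P *ᵥ v)).1
  have hrow : ∑ j, P i j = 1 := by simpa [mulVec, dotProduct] using congrFun hP1 i
  have key : ∀ u : n → ℝ, ‖u‖ ≤ 1 → (P *ᵥ u) i = 1 → u = 1 := fun u hu hPu =>
    eq_one_of_sum_mul_eq_one (hP i) hrow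
      (fun j => (Real.le_norm_self _).trans ((norm_le_pi_norm u j).trans hu)) hPu
  rcases (abs_eq zero_le_one).mp (hi.trans hPv) with h | h
  · exact .inl (key v hv h)
  · refine .inr (neg_eq_iff_eq_neg.mp (key (-v) (by rwa [norm_neg]) ?_))
    rw [mulVec_neg, Pi.neg_apply, h, neg_neg]

variable {n : Type*} [Fintype n] [DecidableEq n]

section

attribute [local instance] Matrix.linftyOpNormedRing Matrix.linftyOpNormedAlgebra

theorem hasSum_exp {𝕂 : Type*} [RCLike 𝕂] (A : Matrix n n 𝕂) :
    HasSum (fun k : ℕ => (k !⁻¹ : 𝕂) • A ^ k) (exp A) :=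
  exp_series_hasSum_exp' A

end

theorem exp_mulVec_of_mulVec_eq_zero {𝕂 : Type*} [RCLike 𝕂] {A : Matrix n n 𝕂} {v : n → 𝕂}
    (h : A *ᵥ v = 0) : exp A *ᵥ v = v := by
  have hterm : ∀ k ≠ 0, ((k !⁻¹ : 𝕂) • A ^ k) *ᵥ v = 0 := fun k hk => by
    obtain ⟨m, rfl⟩ := Nat.exists_eq_succ_of_ne_zero hk
    rw [pow_succ, smul_mulVec, ← mulVec_mulVec, h, mulVec_zero, smul_zero]
  have hv : HasSum (fun k : ℕ => ((k !⁻¹ : 𝕂) • A ^ k) *ᵥ v) v := by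
    simpa using hasSum_single 0 hterm
  exact ((hasSum_exp A).map (mulVec.addMonoidHomLeft v)
    (continuous_id.matrix_mulVec continuous_const)).unique hv

theorem exp_eq_smul_exp_add_scalar (A : Matrix n n ℝ) (c : ℝ) :
    exp A = Real.exp (-c) • exp (A + scalar n c) := by
  have hcomm : Commute (A + scalar n c) (scalar n (-c)) :=
    (scalar_commute _ (fun _ => .all _ _) _).symm
  have hA : A = A + scalar n c + scalar n (-c) := by
    rw [add_assoc, ← map_add, add_neg_cancel, map_zero, add_zero]
  conv_lhs => rw [hA, exp_add_of_commute _ _ hcomm, scalar_apply (-c), exp_diagonal, Pi.exp_def,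
    ← Real.exp_eq_exp_ℝ]
  ext i j
  simp [mul_diagonal, mul_comm]

theorem exp_apply_pos_of_pow_apply_pos {A : Matrix n n ℝ} (hA : ∀ i j, 0 ≤ A i j) {i j : n}
    {k : ℕ} (hk : 0 < (A ^ k) i j) : 0 < exp A i j := by
  have hsum : HasSum (fun m : ℕ => (m !⁻¹ : ℝ) * (A ^ m) i j) (exp A i j) := by
    simpa using Pi.hasSum.mp (Pi.hasSum.mp (hasSum_exp A) i) j
  exact (mul_pos (by positivity) hk).trans_le
    (le_hasSum hsum k fun m _ => mul_nonneg (by positivity) (pow_apply_nonneg hA m i j))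

theorem exists_pow_apply_pos_of_reflTransGen {A : Matrix n n ℝ} (hA : ∀ i j, 0 ≤ A i j) {i j : n}
    (h : Relation.ReflTransGen (fun a b => 0 < A a b) i j) : ∃ k, 0 < (A ^ k) i j := by
  induction h with
  | refl => exact ⟨0, by simp⟩
  | @tail b c _ hbc ih =>
    obtain ⟨k, hk⟩ := ih
    refine ⟨k + 1, ?_⟩
    rw [pow_succ, mul_apply]
    exact sum_pos' (fun m _ => mul_nonneg (pow_apply_nonneg hA k i m) (hA m c))
      ⟨b, mem_univ b, mul_pos hk hbc⟩

theorem exp_apply_pos_of_offDiag_nonneg {A : Matrix n n ℝ} (hA : Pairwise fun i j => 0 ≤ A i j)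
    (hconn : ∀ i j, Relation.ReflTransGen (fun a b => 0 < A a b) i j) (i j : n) :
    0 < exp A i j := by
  set c := ∑ k, |A k k|
  have hM : ∀ a b, 0 ≤ (A + scalar n c) a b ∧ (0 < A a b → 0 < (A + scalar n c) a b) := by
    intro a b
    rcases eq_or_ne a b with rfl | hab
    · have hc : |A a a| ≤ c := single_le_sum (fun k _ => abs_nonneg (A k k)) (mem_univ a)
      simp only [add_apply, scalar_apply, diagonal_apply_eq]
      exact ⟨by linarith [neg_abs_le (A a a)], fun h => by linarith [abs_nonneg (A a a)]⟩
    · simp only [add_apply, scalar_apply, diagonal_apply_ne _ hab, add_zero]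
      exact ⟨hA hab, id⟩
  obtain ⟨k, hk⟩ := exists_pow_apply_pos_of_reflTransGen (fun a b => (hM a b).1)
    (Relation.ReflTransGen.mono (fun a b => (hM a b).2) _ _ (hconn i j))
  rw [exp_eq_smul_exp_add_scalar A c, smul_apply, smul_eq_mul]
  exact mul_pos (Real.exp_pos _) (exp_apply_pos_of_pow_apply_pos (fun a b => (hM a b).1) hk)

end Matrix

def weightedLaplacian {n : Type*} [Fintype n] [DecidableEq n] (w : n → n → ℝ) : Matrix n n ℝ :=
  of fun i j => if i = j then ∑ k, w i k else -w i j

section weightedLaplacian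

variable {n : Type*} [Fintype n] [DecidableEq n] {w : n → n → ℝ}

theorem neg_weightedLaplacian_apply_of_ne {i j : n} (h : i ≠ j) :
    (-weightedLaplacian w) i j = w i j := by
  simp [weightedLaplacian, h]

theorem neg_weightedLaplacian_apply_pos (hdiag : ∀ i, w i i = 0) {i j : n} (h : 0 < w i j) :
    0 < (-weightedLaplacian w) i j := by
  have hij : i ≠ j := by
    rintro rfl
    exact (hdiag i ▸ h).false
  rwa [neg_weightedLaplacian_apply_of_ne hij]

theorem weightedLaplacian_eq_diagonal_sub (hdiag : ∀ i, w i i = 0) :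
    weightedLaplacian w = diagonal (fun i => ∑ k, w i k) - of w := by
  ext i j
  rcases eq_or_ne i j with rfl | h
  · simp [weightedLaplacian, hdiag]
  · simp [weightedLaplacian, h]

theorem weightedLaplacian_mulVec_one (hdiag : ∀ i, w i i = 0) : weightedLaplacian w *ᵥ 1 = 0 := by
  rw [weightedLaplacian_eq_diagonal_sub hdiag, sub_mulVec, sub_eq_zero]
  funext i
  rw [mulVec_diagonal]
  simp [mulVec, dotProduct]

end weightedLaplacian

/-- The all-ones vector attains the induced sup-norm of `exp(-L)` and is
the unique maximizer up to sign. -/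
theorem exp_neg_laplacian_sup_norm_unique_maximizer
    {n : Type*} [Fintype n] [DecidableEq n] (hcard : 2 ≤ Fintype.card n)
    (w : n → n → ℝ) (hw : ∀ i j, 0 ≤ w i j) (hdiag : ∀ i, w i i = 0)
    (hconn : ∀ i j, Relation.ReflTransGen (fun a b => 0 < w a b) i j)
    (L : Matrix n n ℝ)
    (hL : ∀ i j, L i j = if i = j then ∑ k, w i k else -(w i j))
    (P : Matrix n n ℝ) (hP : P = NormedSpace.exp (-L)) :
    (‖P *ᵥ (fun _ => (1 : ℝ))‖ = 1 ∧ ‖(fun _ => (1 : ℝ) : n → ℝ)‖ = 1) ∧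
      ∀ v : n → ℝ, ‖v‖ = 1 → ‖P *ᵥ v‖ = 1 →
        v = (fun _ => (1 : ℝ)) ∨ v = (fun _ => (-1 : ℝ)) := by
  have : Nonempty n := Fintype.card_pos_iff.mp (by omega)
  obtain rfl : L = weightedLaplacian w := ext hL
  subst hP
  have hfix : exp (-weightedLaplacian w) *ᵥ 1 = 1 := exp_mulVec_of_mulVec_eq_zero <| by
    rw [neg_mulVec, weightedLaplacian_mulVec_one hdiag, neg_zero]
  have hpos : ∀ i j, 0 < exp (-weightedLaplacian w) i j :=
    exp_apply_pos_of_offDiag_nonneg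
      (fun i j hij => (hw i j).trans_eq (neg_weightedLaplacian_apply_of_ne hij).symm)
      (fun i j => Relation.ReflTransGen.mono
        (fun _ _ => neg_weightedLaplacian_apply_pos hdiag) _ _ (hconn i j))
  have hone : ‖(1 : n → ℝ)‖ = 1 := (pi_norm_const (1 : ℝ)).trans norm_one
  refine ⟨⟨?_, hone⟩, fun v hv hPv =>
    eq_one_or_eq_neg_one_of_norm_mulVec_eq_one hpos hfix hv.le hPv⟩
  exact (congrArg norm hfix).trans hone
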